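/- For a generator ∂ and any μ ∈ N, the generator equals the restriction of μ to the complement of the hull: ∂μ = μ restricted to [μ]^c, where [μ] = {x : ∂(μ + δ_x) = ∂μ}. In particular, ∂μ retains multiplicities: ∂μ({x}) = μ({x}) for every x in the support of ∂μ. -/

import Mathlib

/-- The Dirac counting measure at a point, in the model of counting measures
on `X` as functions `X → ℕ` (pointwise order and addition). -/
noncomputable def delta {X : Type*} (x : X) : X → ℕ := Set.indicator {x} 1

/-- A generator: a map on counting measures satisfying (H1) thinning, (H2) additivity,
(H3) idempotency and (H4) consistency. -/
def IsGenerator {X : Type*} (D : (X → ℕ) → (X → ℕ)) : Prop :=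
  (∀ μ, D μ ≤ μ) ∧
  (∀ μ x, D μ x ≠ 0 → D (μ + delta x) = D μ + delta x) ∧
  (∀ μ μ' : X → ℕ, μ' ≤ μ - D μ → D (D μ + μ') = D μ) ∧
  (∀ μ μ' ψ : X → ℕ, μ' ≤ μ → D μ = D μ' → D (μ + ψ) = D (μ' + ψ))

/-- The hull operator associated with a generator. -/
def hull {X : Type*} (D : (X → ℕ) → (X → ℕ)) (μ : X → ℕ) : Set X :=
  {x | D (μ + delta x) = D μ}

open scoped Classical

/-- The indicator `H_x(μ) = 1{∂(μ + δ_x) ≠ ∂μ}`, as a real number. -/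
noncomputable def Hf {X : Type*} (D : (X → ℕ) → (X → ℕ)) (x : X) (μ : X → ℕ) : ℝ :=
  if D (μ + delta x) = D μ then 0 else 1

/-!
If `∂μ` misses some mass of `μ` at `x`, then `δ_x ≤ μ - ∂μ`, so by (H3) `∂(∂μ + δ_x) = ∂μ = ∂(∂μ)`;
adding `μ - ∂μ` to both sides via (H4) gives `∂(μ + δ_x) = ∂μ`, i.e. `x ∈ [μ]`. Conversely, by (H2)
adding a point of `supp ∂μ` increases `∂μ` there, so such a point lies outside `[μ]`.
-/

theorem delta_apply_self {X : Type*} (x : X) : delta x x = 1 := by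
  simp [delta]

theorem delta_le_iff {X : Type*} (x : X) (ν : X → ℕ) : delta x ≤ ν ↔ 1 ≤ ν x := by
  refine ⟨fun h => delta_apply_self x ▸ h x, fun h y => ?_⟩
  by_cases hy : y = x
  · subst hy
    simpa [delta_apply_self] using h
  · simp [delta, hy]

namespace IsGenerator

variable {X : Type*} {D : (X → ℕ) → (X → ℕ)}

theorem apply_le (hD : IsGenerator D) (μ : X → ℕ) : D μ ≤ μ := hD.1 μ

theorem apply_add_delta (hD : IsGenerator D) {μ : X → ℕ} {x : X} (hx : D μ x ≠ 0) :
    D (μ + delta x) = D μ + delta x := hD.2.1 μ x hx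

theorem apply_apply_add (hD : IsGenerator D) {μ μ' : X → ℕ} (h : μ' ≤ μ - D μ) :
    D (D μ + μ') = D μ := hD.2.2.1 μ μ' h

theorem apply_add_eq_of_apply_eq (hD : IsGenerator D) {μ μ' : X → ℕ} (ψ : X → ℕ) (hle : μ' ≤ μ)
    (h : D μ = D μ') : D (μ + ψ) = D (μ' + ψ) := hD.2.2.2 μ μ' ψ hle h

theorem apply_idem (hD : IsGenerator D) (μ : X → ℕ) : D (D μ) = D μ := by
  simpa using hD.apply_apply_add (μ' := 0) zero_le

theorem mem_hull_of_apply_lt (hD : IsGenerator D) {μ : X → ℕ} {x : X} (hx : D μ x < μ x) :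
    x ∈ hull D μ := by
  have hδ : delta x ≤ μ - D μ := (delta_le_iff x _).2 (by simp only [Pi.sub_apply]; omega)
  have hsame : D (D μ + delta x) = D (D μ) :=
    (hD.apply_apply_add hδ).trans (hD.apply_idem μ).symm
  have h := hD.apply_add_eq_of_apply_eq (μ - D μ) le_self_add hsame
  rwa [add_right_comm, add_tsub_cancel_of_le (hD.apply_le μ)] at h

theorem apply_eq_of_notMem_hull (hD : IsGenerator D) {μ : X → ℕ} {x : X}
    (hx : x ∉ hull D μ) : D μ x = μ x :=
  (hD.apply_le μ x).eq_or_lt.resolve_right fun hlt => hx (hD.mem_hull_of_apply_lt hlt)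

theorem notMem_hull_of_apply_ne_zero (hD : IsGenerator D) {μ : X → ℕ} {x : X}
    (hx : D μ x ≠ 0) : x ∉ hull D μ := by
  intro hmem
  have h := congrFun (hD.apply_add_delta hx) x
  rw [hmem, Pi.add_apply, delta_apply_self] at h
  omega

theorem apply_eq_zero_of_mem_hull (hD : IsGenerator D) {μ : X → ℕ} {x : X}
    (hx : x ∈ hull D μ) : D μ x = 0 :=
  not_not.1 fun h => hD.notMem_hull_of_apply_ne_zero h hx

end IsGenerator

/-- For a generator `D`, `D μ` is the restriction of `μ` to the complement
of the hull `[μ]`; in particular `D μ` retains the multiplicities of its points. -/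
theorem generator_eq_restrict_hull_compl {X : Type*} (D : (X → ℕ) → (X → ℕ))
    (hD : IsGenerator D) (μ : X → ℕ) :
    D μ = (hull D μ)ᶜ.indicator μ ∧ ∀ x, D μ x ≠ 0 → D μ x = μ x := by
  refine ⟨funext fun x => ?_, fun x hx => ?_⟩
  · by_cases hx : x ∈ hull D μ
    · rw [Set.indicator_of_notMem (Set.notMem_compl_iff.2 hx)]
      exact hD.apply_eq_zero_of_mem_hull hx
    · rw [Set.indicator_of_mem hx]
      exact hD.apply_eq_of_notMem_hull hx
  · exact hD.apply_eq_of_notMem_hull (hD.notMem_hull_of_apply_ne_zero hx)
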